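/- arXiv:1401.3766 — 4 statements merged into one kernel-verified Lean document; each statement's English description precedes it below -/
import Mathlib

section
/- Let $n \geq 1$ and suppose we are given nonnegative reals $p_1,\dots,p_n$ and, for each subset $I \subseteq \{1,\dots,n\}$, a nonnegative real $r_I$, such that for every $I \subseteq \{1,\dots,n\}$ we have $\sum_{i \in I} p_i \leq \sum_{J : J \cap I \neq \emptyset} r_J$. Then for every nonempty $I \subseteq \{1,\dots,n\}$ and every $k \in I$ there exist reals $s_{k,I} \in [0,1]$ such that (1) for every nonempty $I$, $\sum_{k \in I} s_{k,I} \leq 1$, and (2) for every $k \in \{1,\dots,n\}$, $p_k \leq \sum_{I \ni k} s_{k,I} \cdot r_I$. -/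
open Finset

namespace Stmt0Aux
variable {n : ℕ}

noncomputable def P (p : Fin n → ℝ) (S : Finset (Fin n)) : ℝ := ∑ i ∈ S, p i
noncomputable def R (r : Finset (Fin n) → ℝ) (S : Finset (Fin n)) : ℝ :=
  ∑ J ∈ Finset.univ.filter (fun J => (J ∩ S).Nonempty), r J

lemma R_eq (r : Finset (Fin n) → ℝ) (S : Finset (Fin n)) :
    R r S = ∑ J ∈ (Finset.univ : Finset (Finset (Fin n))),
      if (J ∩ S).Nonempty then r J else 0 := by
  rw [R, Finset.sum_filter]

lemma R_empty (r : Finset (Fin n) → ℝ) : R r (∅ : Finset (Fin n)) = 0 := by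
  rw [R_eq]
  apply Finset.sum_eq_zero
  intro J _
  simp

lemma R_submod (r : Finset (Fin n) → ℝ) (hr : ∀ I, 0 ≤ r I) (A B : Finset (Fin n)) :
    R r (A ∪ B) + R r (A ∩ B) ≤ R r A + R r B := by
  simp only [R_eq, ← Finset.sum_add_distrib]
  apply Finset.sum_le_sum
  intro J _
  have h1 : (J ∩ (A ∪ B)).Nonempty ↔ (J ∩ A).Nonempty ∨ (J ∩ B).Nonempty := by
    simp only [Finset.inter_union_distrib_left, Finset.Nonempty, Finset.mem_union]
    exact exists_or
  have h2 : (J ∩ (A ∩ B)).Nonempty → (J ∩ A).Nonempty ∧ (J ∩ B).Nonempty := by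
    intro hne
    constructor
    · exact hne.mono (by intro x hx; simp at hx ⊢; tauto)
    · exact hne.mono (by intro x hx; simp at hx ⊢; tauto)
  have := hr J
  split_ifs <;> simp_all <;> linarith

lemma tight_union (p : Fin n → ℝ) (r : Finset (Fin n) → ℝ) (hr : ∀ I, 0 ≤ r I)
    (h : ∀ S, P p S ≤ R r S) (A B : Finset (Fin n))
    (hA : R r A ≤ P p A) (hB : R r B ≤ P p B) : R r (A ∪ B) ≤ P p (A ∪ B) := by
  have hsub := R_submod r hr A B
  have hsum : P p (A ∪ B) + P p (A ∩ B) = P p A + P p B := Finset.sum_union_inter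
  have := h (A ∩ B)
  linarith

lemma tight_sup (p : Fin n → ℝ) (r : Finset (Fin n) → ℝ) (hr : ∀ I, 0 ≤ r I)
    (h : ∀ S, P p S ≤ R r S) (𝒯 : Finset (Finset (Fin n)))
    (h𝒯 : ∀ S ∈ 𝒯, R r S ≤ P p S) : R r (𝒯.sup id) ≤ P p (𝒯.sup id) := by
  induction 𝒯 using Finset.induction_on with
  | empty => simp [R_empty, P]
  | @insert S 𝒯 _ ih =>
    rw [Finset.sup_insert]
    exact tight_union p r hr h _ _ (h𝒯 S (by simp)) (ih fun T hT => h𝒯 T (by simp [hT]))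

lemma exists_good (p : Fin n → ℝ) (r : Finset (Fin n) → ℝ)
    (hr : ∀ I, 0 ≤ r I) (h : ∀ S, P p S ≤ R r S)
    (k : Fin n) (hk : 0 < p k) :
    ∃ I : Finset (Fin n), k ∈ I ∧ 0 < r I ∧
      ∀ S, k ∉ S → (I ∩ S).Nonempty → P p S < R r S := by
  by_contra hcon
  push_neg at hcon
  set 𝒯 : Finset (Finset (Fin n)) :=
    Finset.univ.filter (fun S => k ∉ S ∧ R r S ≤ P p S) with h𝒯def
  set T : Finset (Fin n) := 𝒯.sup id with hTdef
  have hT : R r T ≤ P p T := by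
    apply tight_sup p r hr h
    intro S hS
    exact (Finset.mem_filter.mp hS).2.2
  have hkT : k ∉ T := by
    intro hmem
    rw [hTdef, Finset.mem_sup] at hmem
    obtain ⟨S, hS, hkS⟩ := hmem
    exact (Finset.mem_filter.mp hS).2.1 hkS
  have hsubsetT : ∀ S ∈ 𝒯, S ⊆ T := fun S hS => Finset.le_sup (f := id) hS
  have hRins : R r (insert k T) = R r T := by
    rw [R, R]
    symm
    apply Finset.sum_subset
    · intro J hJ
      rw [Finset.mem_filter] at hJ ⊢
      exact ⟨hJ.1, hJ.2.mono (Finset.inter_subset_inter le_rfl (Finset.subset_insert k T))⟩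
    · intro J hJ2 hJ1
      rw [Finset.mem_filter] at hJ1 hJ2
      have hJT : J ∩ T = ∅ := by
        by_contra hne
        exact hJ1 ⟨Finset.mem_univ J, Finset.nonempty_iff_ne_empty.mpr hne⟩
      have hkJ : k ∈ J := by
        obtain ⟨x, hx⟩ := hJ2.2
        rw [Finset.mem_inter, Finset.mem_insert] at hx
        rcases hx.2 with rfl | hxT
        · exact hx.1
        · exact absurd (Finset.mem_inter.mpr ⟨hx.1, hxT⟩) (by simp [hJT])
      by_contra hrJ
      have hrJpos : 0 < r J := lt_of_le_of_ne (hr J) (Ne.symm hrJ)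
      obtain ⟨S, hkS, hJS, hStight⟩ := hcon J hkJ hrJpos
      have hST : S ⊆ T := hsubsetT S (Finset.mem_filter.mpr ⟨Finset.mem_univ S, hkS, hStight⟩)
      obtain ⟨x, hx⟩ := hJS
      rw [Finset.mem_inter] at hx
      exact absurd (Finset.mem_inter.mpr ⟨hx.1, hST hx.2⟩) (by simp [hJT])
  have hPins : P p (insert k T) = p k + P p T := Finset.sum_insert hkT
  have := h (insert k T)
  rw [hPins, hRins] at this
  linarith

lemma sum_update {α : Type*} [DecidableEq α] (f : α → ℝ) (k : α) (c : ℝ) (S : Finset α) :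
    ∑ i ∈ S, Function.update f k c i = (∑ i ∈ S, f i) + (if k ∈ S then c - f k else 0) := by
  by_cases hk : k ∈ S
  · rw [Finset.sum_update_of_mem hk, if_pos hk,
      Finset.sum_eq_sum_sdiff_singleton_add hk f]
    ring
  · rw [if_neg hk, add_zero]
    apply Finset.sum_congr rfl
    intro i hi
    exact Function.update_of_ne (fun hik => hk (by rwa [hik] at hi)) _ _

noncomputable def meas (p : Fin n → ℝ) (r : Finset (Fin n) → ℝ) : ℕ :=
  (Finset.univ.filter fun k => p k ≠ 0).card +
  (Finset.univ.filter fun I : Finset (Fin n) => r I ≠ 0).card +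
  (Finset.univ.filter fun S : Finset (Fin n) => P p S ≠ R r S).card

lemma flow (N : ℕ) : ∀ (p : Fin n → ℝ) (r : Finset (Fin n) → ℝ),
    (∀ i, 0 ≤ p i) → (∀ I, 0 ≤ r I) → (∀ S, P p S ≤ R r S) → meas p r ≤ N →
    ∃ f : Fin n → Finset (Fin n) → ℝ,
      (∀ k I, 0 ≤ f k I) ∧ (∀ k I, k ∉ I → f k I = 0) ∧
      (∀ I, ∑ k ∈ I, f k I ≤ r I) ∧
      (∀ k, p k ≤ ∑ I ∈ Finset.univ.filter (fun I => k ∈ I), f k I) := by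
  induction N with
  | zero =>
    intro p r hp hr h hm
    have hp0 : ∀ k, p k = 0 := by
      intro k
      by_contra hk
      have hmem : k ∈ Finset.univ.filter (fun k => p k ≠ 0) := by simp [hk]
      have := Finset.card_pos.mpr ⟨k, hmem⟩
      unfold meas at hm
      omega
    exact ⟨0, fun _ _ => le_rfl, fun _ _ _ => rfl,
      fun I => by simpa using hr I, fun k => by simp [hp0 k]⟩
  | succ N ih =>
    intro p r hp hr h hm
    by_cases hp0 : ∀ k, p k = 0
    · exact ⟨0, fun _ _ => le_rfl, fun _ _ _ => rfl,
        fun I => by simpa using hr I, fun k => by simp [hp0 k]⟩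
    push_neg at hp0
    obtain ⟨k, hk0⟩ := hp0
    have hk : 0 < p k := (hp k).lt_of_ne (Ne.symm hk0)
    obtain ⟨I, hkI, hrI, hgood⟩ := exists_good p r hr h k hk
    classical
    set D : Finset (Finset (Fin n)) :=
      Finset.univ.filter (fun S => k ∉ S ∧ (I ∩ S).Nonempty) with hDdef
    set m : ℝ := if hD : D.Nonempty then D.inf' hD (fun S => R r S - P p S) else p k
      with hmdef
    have hDgood : ∀ S ∈ D, 0 < R r S - P p S := by
      intro S hS
      rw [hDdef, Finset.mem_filter] at hS
      have := hgood S hS.2.1 hS.2.2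
      linarith
    have hm_pos : 0 < m := by
      rw [hmdef]
      split_ifs with hD
      · rw [Finset.lt_inf'_iff]
        exact hDgood
      · exact hk
    have hm_le : ∀ S ∈ D, m ≤ R r S - P p S := by
      intro S hS
      rw [hmdef, dif_pos ⟨S, hS⟩]
      exact Finset.inf'_le _ hS
    set t : ℝ := min (p k) (min (r I) m) with htdef
    have ht_pos : 0 < t := lt_min hk (lt_min hrI hm_pos)
    have ht_pk : t ≤ p k := min_le_left _ _
    have ht_rI : t ≤ r I := le_trans (min_le_right _ _) (min_le_left _ _)
    have ht_m : t ≤ m := le_trans (min_le_right _ _) (min_le_right _ _)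
    have ht_D : ∀ S ∈ D, t ≤ R r S - P p S := fun S hS => le_trans ht_m (hm_le S hS)
    set p' : Fin n → ℝ := Function.update p k (p k - t) with hp'def
    set r' : Finset (Fin n) → ℝ := Function.update r I (r I - t) with hr'def
    have hP' : ∀ S, P p' S = P p S - (if k ∈ S then t else 0) := by
      intro S
      rw [P, P, hp'def, sum_update]
      split_ifs <;> ring
    have hR' : ∀ S, R r' S = R r S - (if (I ∩ S).Nonempty then t else 0) := by
      intro S
      rw [R, R, hr'def, sum_update]
      have : I ∈ Finset.univ.filter (fun J => (J ∩ S).Nonempty) ↔ (I ∩ S).Nonempty := by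
        simp
      split_ifs with h1 h2 h2
      · ring
      · exact absurd (this.mp h1) h2
      · exact absurd (this.mpr h2) h1
      · ring
    have hp'nn : ∀ i, 0 ≤ p' i := by
      intro i
      rw [hp'def]
      by_cases hik : i = k
      · subst hik; rw [Function.update_self]; linarith
      · rw [Function.update_of_ne hik]; exact hp i
    have hr'nn : ∀ J, 0 ≤ r' J := by
      intro J
      rw [hr'def]
      by_cases hJI : J = I
      · subst hJI; rw [Function.update_self]; linarith
      · rw [Function.update_of_ne hJI]; exact hr J
    have h' : ∀ S, P p' S ≤ R r' S := by
      intro S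
      rw [hP' S, hR' S]
      by_cases hkS : k ∈ S
      · have hIS : (I ∩ S).Nonempty := ⟨k, Finset.mem_inter.mpr ⟨hkI, hkS⟩⟩
        rw [if_pos hkS, if_pos hIS]
        linarith [h S]
      · by_cases hIS : (I ∩ S).Nonempty
        · have hSD : S ∈ D := Finset.mem_filter.mpr ⟨Finset.mem_univ S, hkS, hIS⟩
          rw [if_neg hkS, if_pos hIS]
          have := ht_D S hSD
          linarith
        · rw [if_neg hkS, if_neg hIS]
          linarith [h S]
    -- measure decreases
    have hsubA : (Finset.univ.filter fun i => p' i ≠ 0) ⊆ (Finset.univ.filter fun i => p i ≠ 0) := by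
      intro i hi
      rw [Finset.mem_filter] at hi ⊢
      refine ⟨hi.1, ?_⟩
      by_cases hik : i = k
      · subst hik; exact hk0
      · rw [hp'def, Function.update_of_ne hik] at hi; exact hi.2
    have hsubB : (Finset.univ.filter fun J : Finset (Fin n) => r' J ≠ 0) ⊆
        (Finset.univ.filter fun J => r J ≠ 0) := by
      intro J hJ
      rw [Finset.mem_filter] at hJ ⊢
      refine ⟨hJ.1, ?_⟩
      by_cases hJI : J = I
      · subst hJI; exact fun hz => by rw [hz] at hrI; exact absurd hrI (lt_irrefl 0)
      · rw [hr'def, Function.update_of_ne hJI] at hJ; exact hJ.2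
    have hsubC : (Finset.univ.filter fun S : Finset (Fin n) => P p' S ≠ R r' S) ⊆
        (Finset.univ.filter fun S => P p S ≠ R r S) := by
      intro S hS
      rw [Finset.mem_filter] at hS ⊢
      refine ⟨hS.1, fun heq => hS.2 ?_⟩
      rw [hP' S, hR' S]
      by_cases hkS : k ∈ S
      · have hIS : (I ∩ S).Nonempty := ⟨k, Finset.mem_inter.mpr ⟨hkI, hkS⟩⟩
        rw [if_pos hkS, if_pos hIS, heq]
      · by_cases hIS : (I ∩ S).Nonempty
        · have hSD : S ∈ D := Finset.mem_filter.mpr ⟨Finset.mem_univ S, hkS, hIS⟩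
          have := ht_D S hSD
          rw [heq] at this
          linarith
        · rw [if_neg hkS, if_neg hIS, heq]
    have ht_cases : t = p k ∨ t = r I ∨ ∃ S₀ ∈ D, t = R r S₀ - P p S₀ := by
      rcases min_choice (p k) (min (r I) m) with h1 | h1
      · exact Or.inl (htdef ▸ h1)
      · rcases min_choice (r I) m with h2 | h2
        · exact Or.inr (Or.inl (by rw [htdef, h1, h2]))
        · by_cases hD : D.Nonempty
          · obtain ⟨S₀, hS₀, hS₀eq⟩ := Finset.exists_mem_eq_inf' hD (fun S => R r S - P p S)
            refine Or.inr (Or.inr ⟨S₀, hS₀, ?_⟩)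
            rw [htdef, h1, h2, hmdef, dif_pos hD, hS₀eq]
          · exact Or.inl (by rw [htdef, h1, h2, hmdef, dif_neg hD])
    have hmeas : meas p' r' < meas p r := by
      have hcA := Finset.card_le_card hsubA
      have hcB := Finset.card_le_card hsubB
      have hcC := Finset.card_le_card hsubC
      rcases ht_cases with h1 | h1 | ⟨S₀, hS₀, h1⟩
      · have hkA : k ∈ (Finset.univ.filter fun i => p i ≠ 0) := by simp [hk0]
        have hkA' : k ∉ (Finset.univ.filter fun i => p' i ≠ 0) := by
          simp [hp'def, Function.update_self, h1]
        have := Finset.card_lt_card ((Finset.ssubset_iff_of_subset hsubA).mpr ⟨k, hkA, hkA'⟩)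
        unfold meas
        omega
      · have hIB : I ∈ (Finset.univ.filter fun J : Finset (Fin n) => r J ≠ 0) := by
          simp; intro hz; rw [hz] at hrI; exact absurd hrI (lt_irrefl 0)
        have hIB' : I ∉ (Finset.univ.filter fun J : Finset (Fin n) => r' J ≠ 0) := by
          simp [hr'def, Function.update_self, h1]
        have := Finset.card_lt_card ((Finset.ssubset_iff_of_subset hsubB).mpr ⟨I, hIB, hIB'⟩)
        unfold meas
        omega
      · have hkS₀ : k ∉ S₀ := (Finset.mem_filter.mp hS₀).2.1
        have hIS₀ : (I ∩ S₀).Nonempty := (Finset.mem_filter.mp hS₀).2.2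
        have hS₀C : S₀ ∈ (Finset.univ.filter fun S : Finset (Fin n) => P p S ≠ R r S) := by
          have := hDgood S₀ hS₀
          simp only [Finset.mem_filter, Finset.mem_univ, true_and]
          intro heq
          rw [heq] at this
          linarith
        have hS₀C' : S₀ ∉ (Finset.univ.filter fun S : Finset (Fin n) => P p' S ≠ R r' S) := by
          simp only [Finset.mem_filter, Finset.mem_univ, true_and, not_not]
          rw [hP' S₀, hR' S₀, if_neg hkS₀, if_pos hIS₀]
          linarith
        have := Finset.card_lt_card ((Finset.ssubset_iff_of_subset hsubC).mpr ⟨S₀, hS₀C, hS₀C'⟩)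
        unfold meas
        omega
    obtain ⟨f', hf1, hf2, hf3, hf4⟩ := ih p' r' hp'nn hr'nn h' (by
      have : meas p' r' < N + 1 := lt_of_lt_of_le hmeas hm
      omega)
    refine ⟨fun k' I' => f' k' I' + if k' = k ∧ I' = I then t else 0, ?_, ?_, ?_, ?_⟩
    · intro k' I'
      dsimp only
      have := hf1 k' I'
      split_ifs <;> linarith
    · intro k' I' hk'I'
      dsimp only
      rw [hf2 k' I' hk'I', zero_add]
      rw [if_neg]
      rintro ⟨rfl, rfl⟩
      exact hk'I' hkI
    · intro I'
      dsimp only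
      rw [Finset.sum_add_distrib]
      by_cases hI' : I' = I
      · subst hI'
        have hsum2 : (∑ k' ∈ I', if k' = k ∧ I' = I' then t else 0) = t := by
          simp only [and_true]
          rw [Finset.sum_ite_eq' I' k (fun _ => t), if_pos hkI]
        rw [hsum2]
        have := hf3 I'
        rw [hr'def, Function.update_self] at this
        linarith
      · have hsum2 : (∑ k' ∈ I', if k' = k ∧ I' = I then t else 0) = 0 := by
          apply Finset.sum_eq_zero
          intro k' _
          rw [if_neg (fun hc => hI' hc.2)]
        rw [hsum2, add_zero]
        have := hf3 I'
        rw [hr'def, Function.update_of_ne hI'] at this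
        exact this
    · intro k'
      dsimp only
      rw [Finset.sum_add_distrib]
      by_cases hk' : k' = k
      · subst hk'
        have hsum2 : (∑ I' ∈ Finset.univ.filter (fun I' => k' ∈ I'),
            if k' = k' ∧ I' = I then t else 0) = t := by
          simp only [true_and]
          rw [Finset.sum_ite_eq' _ I (fun _ => t), if_pos (by simp [hkI])]
        rw [hsum2]
        have := hf4 k'
        rw [hp'def, Function.update_self] at this
        linarith
      · have hsum2 : (∑ I' ∈ Finset.univ.filter (fun I' => k' ∈ I'),
            if k' = k ∧ I' = I then t else 0) = 0 := by
          apply Finset.sum_eq_zero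
          intro I' _
          rw [if_neg (fun hc => hk' hc.1)]
        rw [hsum2, add_zero]
        have := hf4 k'
        rw [hp'def, Function.update_of_ne hk'] at this
        exact this

end Stmt0Aux

/-- Disentangling Sets.  Given a probability assignment
`({pᵢ}, {r_I})` (nonnegative reals with `∑_{i∈I} pᵢ ≤ ∑_{J∩I≠∅} r_J` for all `I`),
there are reals `s k I ∈ [0,1]` (for `k ∈ I`, `I` nonempty) with
`∑_{k∈I} s k I ≤ 1` for each nonempty `I`, and `p k ≤ ∑_{I∋k} s k I * r I` for each `k`. -/
theorem stmt0 (n : ℕ) (hn : 1 ≤ n) (p : Fin n → ℝ) (r : Finset (Fin n) → ℝ)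
    (hp : ∀ i, 0 ≤ p i) (hr : ∀ I, 0 ≤ r I)
    (h : ∀ I : Finset (Fin n),
      ∑ i ∈ I, p i ≤ ∑ J ∈ Finset.univ.filter (fun J => (J ∩ I).Nonempty), r J) :
    ∃ s : Fin n → Finset (Fin n) → ℝ,
      (∀ k (I : Finset (Fin n)), I.Nonempty → k ∈ I → 0 ≤ s k I ∧ s k I ≤ 1) ∧
      (∀ I : Finset (Fin n), I.Nonempty → ∑ k ∈ I, s k I ≤ 1) ∧
      (∀ k, p k ≤ ∑ I ∈ Finset.univ.filter (fun I => k ∈ I), s k I * r I) := by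
  classical
  obtain ⟨f, hf1, hf2, hf3, hf4⟩ :=
    Stmt0Aux.flow (Stmt0Aux.meas p r) p r hp hr (fun S => h S) le_rfl
  have hfle : ∀ k I, k ∈ I → f k I ≤ r I := by
    intro k I hkI
    calc f k I ≤ ∑ k' ∈ I, f k' I :=
          Finset.single_le_sum (fun k' _ => hf1 k' I) hkI
      _ ≤ r I := hf3 I
  refine ⟨fun k I => if r I = 0 then 0 else f k I / r I, ?_, ?_, ?_⟩
  · intro k I _ hkI
    dsimp only
    by_cases hz : r I = 0
    · simp [hz]
    · have hpos : 0 < r I := (hr I).lt_of_ne (Ne.symm hz)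
      rw [if_neg hz]
      constructor
      · exact div_nonneg (hf1 k I) (hr I)
      · rw [div_le_one hpos]
        exact hfle k I hkI
  · intro I _
    dsimp only
    by_cases hz : r I = 0
    · simp [hz]
    · have hpos : 0 < r I := (hr I).lt_of_ne (Ne.symm hz)
      simp only [if_neg hz]
      rw [← Finset.sum_div, div_le_one hpos]
      exact hf3 I
  · intro k
    dsimp only
    have heq : ∀ I ∈ Finset.univ.filter (fun I => k ∈ I),
        (if r I = 0 then 0 else f k I / r I) * r I = f k I := by
      intro I hI
      rw [Finset.mem_filter] at hI
      by_cases hz : r I = 0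
      · rw [if_pos hz, zero_mul]
        have h1 := hfle k I hI.2
        have h2 := hf1 k I
        rw [hz] at h1
        linarith
      · rw [if_neg hz, div_mul_cancel₀ _ hz]
    rw [Finset.sum_congr rfl heq]
    exact hf4 k
end

section
/- Let $(\mathcal{S},\mathcal{L},\mathcal{P})$ be a labelled Markov chain (i.e., $\mathcal{S}$ is countable and $\mathcal{P} : \mathcal{S}\times\mathcal{L}\times\mathcal{S} \to [0,1]$ satisfies $\sum_{t} \mathcal{P}(s,l,t) \le 1$ for all $s,l$). If $(R_i)_{i\in I}$ is a family of probabilistic simulations (preorders $R$ on $\mathcal{S}$ such that $s\,R\,t$ implies $\mathcal{P}(s,l,X) \le \mathcal{P}(t,l,R(X))$ for every $X\subseteq\mathcal{S}$ and label $l$, where $R(X)=\{y : \exists x\in X,\ x\,R\,y\}$), then the reflexive-transitive closure of $\bigcup_{i\in I} R_i$ is a probabilistic simulation. -/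
open scoped ENNReal

/-- Probability of jumping from `s` with label `l` into the set `X`. -/
noncomputable def pSet {S L : Type*} (P : S → L → S → ℝ≥0∞) (s : S) (l : L) (X : Set S) : ℝ≥0∞ :=
  ∑' x : X, P s l x

/-- Relational image `R(X) = {y | ∃ x ∈ X, x R y}`. -/
def rimg {S : Type*} (R : S → S → Prop) (X : Set S) : Set S := {y | ∃ x ∈ X, R x y}

/-- `E` is an equivalence class of `R`. -/
def EqClass {S : Type*} (R : S → S → Prop) (E : Set S) : Prop := ∃ z, E = {y | R z y}

/-- A labelled Markov chain structure on a transition probability matrix. -/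
structure IsLMC {S L : Type*} (P : S → L → S → ℝ≥0∞) : Prop where
  le_one : ∀ s l t, P s l t ≤ 1
  sum_le_one : ∀ s l, (∑' t, P s l t) ≤ 1

/-- A probabilistic simulation: a preorder `R` such that `s R t` implies
`P(s,l,X) ≤ P(t,l,R(X))`. -/
def IsProbSim {S L : Type*} (P : S → L → S → ℝ≥0∞) (R : S → S → Prop) : Prop :=
  Reflexive R ∧ Transitive R ∧
    ∀ s t, R s t → ∀ (l : L) (X : Set S), pSet P s l X ≤ pSet P t l (rimg R X)

/-- A probabilistic bisimulation: an equivalence relation `R` such that `s R t` implies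
`P(s,l,E) = P(t,l,E)` for every `R`-equivalence class `E`. -/
def IsProbBisim {S L : Type*} (P : S → L → S → ℝ≥0∞) (R : S → S → Prop) : Prop :=
  Equivalence R ∧
    ∀ s t, R s t → ∀ (l : L) (E : Set S), EqClass R E → pSet P s l E = pSet P t l E

/-- Similarity: the union of all probabilistic simulations. -/
def LMCSimilar {S L : Type*} (P : S → L → S → ℝ≥0∞) (s t : S) : Prop :=
  ∃ R, IsProbSim P R ∧ R s t

/-- Bisimilarity: the union of all probabilistic bisimulations. -/
def Bisimilar {S L : Type*} (P : S → L → S → ℝ≥0∞) (s t : S) : Prop :=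
  ∃ R, IsProbBisim P R ∧ R s t

/- The closure of the union is reached one simulation step at a time: an inductive step
`b R_i c` pushes the mass from `rimg R* X` to `rimg R_i (rimg R* X)`, which stays inside
`rimg R* X` because `R*` is closed under appending an `R_i`-step. -/

open Relation

theorem pSet_mono {S L : Type*} (P : S → L → S → ℝ≥0∞) (s : S) (l : L) {X Y : Set S}
    (h : X ⊆ Y) : pSet P s l X ≤ pSet P s l Y := by
  unfold pSet
  rw [tsum_subtype, tsum_subtype]
  exact ENNReal.tsum_le_tsum fun x => Set.indicator_le_indicator_of_subset h (fun _ => zero_le) x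

theorem rimg_mono {S : Type*} {r r' : S → S → Prop} (h : ∀ x y, r x y → r' x y) (X : Set S) :
    rimg r X ⊆ rimg r' X := fun _ ⟨x, hx, hxy⟩ => ⟨x, hx, h x _ hxy⟩

theorem subset_rimg_reflTransGen {S : Type*} (r : S → S → Prop) (X : Set S) :
    X ⊆ rimg (ReflTransGen r) X := fun y hy => ⟨y, hy, .refl⟩

theorem rimg_rimg_reflTransGen_subset {S : Type*} (r : S → S → Prop) (X : Set S) :
    rimg r (rimg (ReflTransGen r) X) ⊆ rimg (ReflTransGen r) X :=
  fun _ ⟨_, ⟨x, hx, hxz⟩, hzy⟩ => ⟨x, hx, hxz.tail hzy⟩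

theorem pSet_le_pSet_rimg_reflTransGen {S L : Type*} (P : S → L → S → ℝ≥0∞)
    {r : S → S → Prop} (hr : ∀ s t, r s t → ∀ l X, pSet P s l X ≤ pSet P t l (rimg r X))
    {s t : S} (hst : ReflTransGen r s t) (l : L) (X : Set S) :
    pSet P s l X ≤ pSet P t l (rimg (ReflTransGen r) X) := by
  induction hst with
  | refl => exact pSet_mono P s l (subset_rimg_reflTransGen r X)
  | @tail b c _ hbc ih =>
    calc pSet P s l X ≤ pSet P b l (rimg (ReflTransGen r) X) := ih
      _ ≤ pSet P c l (rimg r (rimg (ReflTransGen r) X)) := hr b c hbc l _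
      _ ≤ pSet P c l (rimg (ReflTransGen r) X) :=
        pSet_mono P c l (rimg_rimg_reflTransGen_subset r X)

theorem IsProbSim.reflTransGen {S L : Type*} {P : S → L → S → ℝ≥0∞} {r : S → S → Prop}
    (hr : ∀ s t, r s t → ∀ l X, pSet P s l X ≤ pSet P t l (rimg r X)) :
    IsProbSim P (ReflTransGen r) :=
  ⟨fun _ => .refl, fun _ _ _ => ReflTransGen.trans,
    fun _ _ hst => pSet_le_pSet_rimg_reflTransGen P hr hst⟩

theorem stmt1_general {S L : Type*} (P : S → L → S → ℝ≥0∞)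
    {I : Type*} (R : I → S → S → Prop) (hR : ∀ i, IsProbSim P (R i)) :
    IsProbSim P (Relation.ReflTransGen (fun x y => ∃ i, R i x y)) := by
  refine IsProbSim.reflTransGen fun s t ⟨i, hi⟩ l X => ?_
  calc pSet P s l X ≤ pSet P t l (rimg (R i) X) := (hR i).2.2 s t hi l X
    _ ≤ pSet P t l (rimg (fun x y => ∃ i, R i x y) X) :=
      pSet_mono P t l (rimg_mono (fun _ _ h => ⟨i, h⟩) X)

/-- the reflexive-transitive closure of a union of probabilistic
simulations on a labelled Markov chain is a probabilistic simulation. -/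
theorem stmt1 {S L : Type*} [Countable S] (P : S → L → S → ℝ≥0∞) (hP : IsLMC P)
    {I : Type*} (R : I → S → S → Prop) (hR : ∀ i, IsProbSim P (R i)) :
    IsProbSim P (Relation.ReflTransGen (fun x y => ∃ i, R i x y)) :=
  stmt1_general P R hR
end

section
/- Let $(\mathcal{S},\mathcal{L},\mathcal{P})$ be a labelled Markov chain. Any symmetric probabilistic simulation $R$ (a preorder such that $s\,R\,t$ implies $\mathcal{P}(s,l,X) \le \mathcal{P}(t,l,R(X))$ for all $X\subseteq\mathcal{S}$, $l\in\mathcal{L}$) is a probabilistic bisimulation, i.e., an equivalence relation such that $s\,R\,t$ implies $\mathcal{P}(s,l,E) = \mathcal{P}(t,l,E)$ for every equivalence class $E$ of $R$ and every label $l$. -/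
open scoped ENNReal

/-- Similarity: the union of all probabilistic simulations. -/
def ProbSimilar {S L : Type*} (P : S → L → S → ℝ≥0∞) (s t : S) : Prop :=
  ∃ R, IsProbSim P R ∧ R s t

theorem rimg_eq_of_eqClass {S : Type*} {R : S → S → Prop} (hrefl : Reflexive R)
    (htrans : Transitive R) {E : Set S} (hE : EqClass R E) : rimg R E = E := by
  obtain ⟨z, rfl⟩ := hE
  ext y
  exact ⟨fun ⟨_, hzx, hxy⟩ => htrans hzx hxy, fun hzy => ⟨y, hzy, hrefl y⟩⟩

theorem IsProbSim.pSet_eqClass_le {S L : Type*} {P : S → L → S → ℝ≥0∞} {R : S → S → Prop}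
    (hsim : IsProbSim P R) {s t : S} (hst : R s t) (l : L) {E : Set S} (hE : EqClass R E) :
    pSet P s l E ≤ pSet P t l E := by
  obtain ⟨hrefl, htrans, hle⟩ := hsim
  simpa only [rimg_eq_of_eqClass hrefl htrans hE] using hle s t hst l E

theorem stmt2_general {S L : Type*} (P : S → L → S → ℝ≥0∞)
    (R : S → S → Prop) (hsim : IsProbSim P R) (hsymm : Symmetric R) :
    IsProbBisim P R := by
  refine ⟨⟨hsim.1, fun h => hsymm h, fun h h' => hsim.2.1 h h'⟩, fun s t hst l E hE => ?_⟩
  exact le_antisymm (hsim.pSet_eqClass_le hst l hE) (hsim.pSet_eqClass_le (hsymm hst) l hE)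

/-- any symmetric probabilistic simulation on a labelled Markov chain
is a probabilistic bisimulation. -/
theorem stmt2 {S L : Type*} [Countable S] (P : S → L → S → ℝ≥0∞) (hP : IsLMC P)
    (R : S → S → Prop) (hsim : IsProbSim P R) (hsymm : Symmetric R) :
    IsProbBisim P R :=
  stmt2_general P R hsim hsymm
end

section
/- Let $(\mathcal{X},\Sigma,\mu)$ be a labelled Markov process. Then there exists a largest bisimulation on $(\mathcal{X},\Sigma,\mu)$, and it is an equivalence relation. -/
open scoped ENNReal
open MeasureTheory

/-- A labelled Markov process structure: every `μ x a` is a sub-probability measure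
and `x ↦ μ x a A` is measurable for measurable `A`. -/
def IsLMP {X A : Type*} [MeasurableSpace X] (μ : X → A → Measure X) : Prop :=
  (∀ x a, μ x a Set.univ ≤ 1) ∧
  (∀ (a : A) (B : Set X), MeasurableSet B → Measurable fun x => μ x a B)

/-- A bisimulation on a labelled Markov process: a reflexive relation `R` such that
(1) related states are monotone on measurable `R`-closed sets and
(2) related states have equal total mass. -/
def IsLMPBisim {X A : Type*} [MeasurableSpace X] (μ : X → A → Measure X)
    (R : X → X → Prop) : Prop :=
  Reflexive R ∧
  (∀ x y, R x y → ∀ (a : A) (B : Set X), MeasurableSet B → B = rimg R B →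
    μ x a B ≤ μ y a B) ∧
  (∀ x y, R x y → ∀ a : A, μ x a Set.univ = μ y a Set.univ)

section rimg

variable {S : Type*} {R : S → S → Prop} {B : Set S}

lemma mem_of_eq_rimg (hB : B = rimg R B) {x y : S} (hxy : R x y) (hx : x ∈ B) : y ∈ B := by
  rw [hB]
  exact ⟨x, hx, hxy⟩

lemma eq_rimg_of_forall (hR : ∀ x, R x x) (hB : ∀ x y, R x y → x ∈ B → y ∈ B) :
    B = rimg R B :=
  subset_antisymm (fun b hb => ⟨b, hb, hR b⟩) fun _ ⟨x, hx, hxy⟩ => hB x _ hxy hx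

lemma compl_eq_rimg_of_eq_rimg_flip (hR : ∀ x, R x x) (hB : B = rimg (flip R) B) :
    Bᶜ = rimg R Bᶜ :=
  eq_rimg_of_forall hR fun _ _ hxy hx hy => hx (mem_of_eq_rimg hB hxy hy)

lemma eq_rimg_of_le {R' : S → S → Prop} (hR : ∀ x, R x x) (hRR' : ∀ x y, R x y → R' x y)
    (hB : B = rimg R' B) : B = rimg R B :=
  eq_rimg_of_forall hR fun _ _ hxy => mem_of_eq_rimg hB (hRR' _ _ hxy)

end rimg

lemma measure_le_of_measure_compl_ge {X : Type*} [MeasurableSpace X] {ν ν' : Measure X}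
    [IsFiniteMeasure ν] (huniv : ν Set.univ = ν' Set.univ) {B : Set X} (hB : MeasurableSet B)
    (hcompl : ν' Bᶜ ≤ ν Bᶜ) : ν B ≤ ν' B := by
  refine (ENNReal.add_le_add_iff_right (measure_ne_top ν Bᶜ)).mp ?_
  calc ν B + ν Bᶜ = ν' B + ν' Bᶜ := by
        rw [measure_add_measure_compl hB, measure_add_measure_compl hB, huniv]
    _ ≤ ν' B + ν Bᶜ := add_le_add le_rfl hcompl

section LMP

variable {X A : Type*} [MeasurableSpace X] {μ : X → A → Measure X}

lemma IsLMP.isFiniteMeasure (hμ : IsLMP μ) (x : X) (a : A) : IsFiniteMeasure (μ x a) :=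
  ⟨(hμ.1 x a).trans_lt ENNReal.one_lt_top⟩

lemma isLMPBisim_eq (μ : X → A → Measure X) : IsLMPBisim μ (· = ·) :=
  ⟨fun _ => rfl, fun _ _ h _ _ _ _ => h ▸ le_rfl, fun _ _ h _ => h ▸ rfl⟩

namespace IsLMPBisim

variable {R R' : X → X → Prop}

lemma flip (hμ : IsLMP μ) (h : IsLMPBisim μ R) : IsLMPBisim μ (flip R) := by
  obtain ⟨hrefl, hle, huniv⟩ := h
  refine ⟨fun x => hrefl x, fun x y hxy a B hB hBc => ?_, fun x y hxy a => (huniv y x hxy a).symm⟩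
  have := hμ.isFiniteMeasure x a
  exact measure_le_of_measure_compl_ge (huniv y x hxy a).symm hB
    (hle y x hxy a Bᶜ hB.compl (compl_eq_rimg_of_eq_rimg_flip hrefl hBc))

lemma comp (h : IsLMPBisim μ R) (h' : IsLMPBisim μ R') :
    IsLMPBisim μ (Relation.Comp R R') := by
  obtain ⟨hrefl, hle, huniv⟩ := h
  obtain ⟨hrefl', hle', huniv'⟩ := h'
  refine ⟨fun x => ⟨x, hrefl x, hrefl' x⟩, ?_, ?_⟩
  · rintro x z ⟨y, hxy, hyz⟩ a B hB hBc
    have hBR := eq_rimg_of_le hrefl (fun _ v huv => ⟨v, huv, hrefl' v⟩) hBc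
    have hBR' := eq_rimg_of_le hrefl' (fun u _ huv => ⟨u, hrefl u, huv⟩) hBc
    exact (hle x y hxy a B hB hBR).trans (hle' y z hyz a B hB hBR')
  · rintro x z ⟨y, hxy, hyz⟩ a
    exact (huniv x y hxy a).trans (huniv' y z hyz a)

end IsLMPBisim

def LMPBisimilar (μ : X → A → Measure X) (x y : X) : Prop :=
  ∃ R : X → X → Prop, IsLMPBisim μ R ∧ R x y

lemma isLMPBisim_lmpBisimilar : IsLMPBisim μ (LMPBisimilar μ) := by
  refine ⟨fun x => ⟨_, isLMPBisim_eq μ, rfl⟩, ?_, ?_⟩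
  · rintro x y ⟨R, hR, hxy⟩ a B hB hBc
    exact hR.2.1 x y hxy a B hB (eq_rimg_of_le hR.1 (fun _ _ huv => ⟨R, hR, huv⟩) hBc)
  · rintro x y ⟨R, hR, hxy⟩ a
    exact hR.2.2 x y hxy a

lemma equivalence_lmpBisimilar (hμ : IsLMP μ) : Equivalence (LMPBisimilar μ) where
  refl _ := ⟨_, isLMPBisim_eq μ, rfl⟩
  symm := fun ⟨R, hR, hxy⟩ => ⟨flip R, hR.flip hμ, hxy⟩
  trans := fun ⟨R, hR, hxy⟩ ⟨R', hR', hyz⟩ => ⟨Relation.Comp R R', hR.comp hR', _, hxy, hyz⟩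

end LMP

/-- every labelled Markov process has a largest bisimulation,
and it is an equivalence relation. -/
theorem stmt7 {X A : Type*} [MeasurableSpace X] (μ : X → A → Measure X)
    (hμ : IsLMP μ) :
    ∃ R : X → X → Prop, IsLMPBisim μ R ∧ Equivalence R ∧
      ∀ R' : X → X → Prop, IsLMPBisim μ R' → ∀ x y, R' x y → R x y :=
  ⟨LMPBisimilar μ, isLMPBisim_lmpBisimilar, equivalence_lmpBisimilar hμ,
    fun R hR _ _ hxy => ⟨R, hR, hxy⟩⟩
end
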